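/- For 0 < α ≤ 1, A ∈ M_n(ℂ) positive definite, and E an orthogonal projection, the weighted geometric mean satisfies A #_α E = (E A^{-1} E)^{α-1}, where the (α−1)-power is computed on the range of E (generalized inverse sense, defined as 0 on ker E). -/

import Mathlib

open Matrix Filter ComplexOrder

noncomputable def hfun {n : ℕ} (f : ℝ → ℂ) (A : Matrix (Fin n) (Fin n) ℂ) :
    Matrix (Fin n) (Fin n) ℂ :=
  if hA : A.IsHermitian then
    (hA.eigenvectorUnitary : Matrix (Fin n) (Fin n) ℂ) *
      Matrix.diagonal (fun i => f (hA.eigenvalues i)) *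
      star (hA.eigenvectorUnitary : Matrix (Fin n) (Fin n) ℂ)
  else 0

noncomputable def mrpow {n : ℕ} (A : Matrix (Fin n) (Fin n) ℂ) (p : ℝ) :
    Matrix (Fin n) (Fin n) ℂ :=
  hfun (fun t => ((t ^ p : ℝ) : ℂ)) A

noncomputable def eigsDesc {n : ℕ} (A : Matrix (Fin n) (Fin n) ℂ) : List ℝ :=
  if hA : A.IsHermitian then (List.ofFn hA.eigenvalues).mergeSort (fun a b => b ≤ a) else []

noncomputable def lam {n : ℕ} (A : Matrix (Fin n) (Fin n) ℂ) (k : ℕ) : ℝ :=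
  (eigsDesc A).getD k 0

noncomputable def ranM {n : ℕ} (A : Matrix (Fin n) (Fin n) ℂ) :
    Submodule ℂ (EuclideanSpace ℂ (Fin n)) :=
  LinearMap.range (Matrix.toEuclideanLin A)

noncomputable def projOnto {n : ℕ} (U : Submodule ℂ (EuclideanSpace ℂ (Fin n))) :
    Matrix (Fin n) (Fin n) ℂ :=
  LinearMap.toMatrix (EuclideanSpace.basisFun (Fin n) ℂ).toBasis
    (EuclideanSpace.basisFun (Fin n) ℂ).toBasis
    (U.subtype.comp (U.orthogonalProjectionOnto).toLinearMap)

def IsOperatorMonotone (f : ℝ → ℝ) : Prop :=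
  ∀ (k : ℕ) (A B : Matrix (Fin k) (Fin k) ℂ), A.PosSemidef → B.PosSemidef →
    (B - A).PosSemidef →
    (hfun (fun t => (f t : ℂ)) B - hfun (fun t => (f t : ℂ)) A).PosSemidef

noncomputable def kuboAndo {n : ℕ} (f : ℝ → ℝ) (A B : Matrix (Fin n) (Fin n) ℂ) :
    Matrix (Fin n) (Fin n) ℂ :=
  mrpow A (1/2) *
    hfun (fun t => (f t : ℂ)) (mrpow A (-(1/2)) * B * mrpow A (-(1/2))) *
    mrpow A (1/2)

noncomputable def gpow {n : ℕ} (A : Matrix (Fin n) (Fin n) ℂ) (p : ℝ) :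
    Matrix (Fin n) (Fin n) ℂ :=
  hfun (fun t => if t = 0 then 0 else ((t ^ p : ℝ) : ℂ)) A

/-!
Write `T = A^{-1/2}` and `M = E T`, so that `T E T = Mᴴ M` and `E A⁻¹ E = M Mᴴ`.
Matrix functions intertwine, `M f(Mᴴ M) = f(M Mᴴ) M`, since `f` agrees with a polynomial on
the finite spectra. Factoring `t^α = t · (t^α / t)` then gives
`A^{1/2} (Mᴴ M)^α A^{1/2} = A^{1/2} Mᴴ (M Mᴴ)^{α-1} M A^{1/2} = E (M Mᴴ)^{α-1} E`,
and `E` acts as the identity on both sides of a function of `M Mᴴ` vanishing at `0`.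
-/

open Polynomial

theorem SemiconjBy.aeval {R A : Type*} [CommSemiring R] [Semiring A] [Algebra R A] {a x y : A}
    (h : SemiconjBy a x y) (p : R[X]) : SemiconjBy a (aeval x p) (aeval y p) := by
  induction p using Polynomial.induction_on' with
  | add p q hp hq => simpa only [map_add] using hp.add_right hq
  | monomial k r =>
    simpa only [aeval_monomial] using
      (Algebra.commute_algebraMap_left r a).symm.semiconjBy.mul_right (h.pow_right k)

theorem Set.Finite.exists_polynomial_eqOn {K : Type*} [Field K] {s : Set K} (hs : s.Finite)
    (f : K → K) : ∃ p : K[X], s.EqOn f p.eval := by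
  classical
  exact ⟨Lagrange.interpolate hs.toFinset id f, fun x hx =>
    (Lagrange.eval_interpolate_at_node f Function.injective_id.injOn (hs.mem_toFinset.2 hx)).symm⟩

namespace Matrix

variable {n 𝕜 : Type*} [RCLike 𝕜] [Fintype n] [DecidableEq n]

theorem mul_cfc_conjTranspose_mul_self (M : Matrix n n 𝕜) (f : ℝ → ℝ) :
    M * cfc f (Mᴴ * M) = cfc f (M * Mᴴ) * M := by
  obtain ⟨p, hp⟩ := ((finite_real_spectrum (A := Mᴴ * M)).union
    (finite_real_spectrum (A := M * Mᴴ))).exists_polynomial_eqOn f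
  rw [cfc_congr (hp.mono Set.subset_union_left), cfc_congr (hp.mono Set.subset_union_right),
    cfc_polynomial p _ (isHermitian_conjTranspose_mul_self M).isSelfAdjoint,
    cfc_polynomial p _ (isHermitian_mul_conjTranspose_self M).isSelfAdjoint]
  exact SemiconjBy.aeval (by simp only [SemiconjBy, Matrix.mul_assoc]) p

theorem cfc_eq_mul_cfc_div {Y : Matrix n n 𝕜} (hY : Y.IsHermitian) {f : ℝ → ℝ}
    (hf : f 0 = 0) :
    cfc f Y = Y * cfc (fun t => f t / t) Y := by
  calc cfc f Y = cfc (fun t => id t * (f t / t)) Y := cfc_congr fun t _ => by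
        rcases eq_or_ne t 0 with rfl | ht
        · simp [hf]
        · simp [mul_div_cancel₀ _ ht]
    _ = Y * cfc (fun t => f t / t) Y := by
      rw [cfc_mul id (fun t => f t / t) Y (Y.finite_real_spectrum.continuousOn _)
        (Y.finite_real_spectrum.continuousOn _), cfc_id ℝ Y hY.isSelfAdjoint]

theorem cfc_mul_of_mul_eq {Y E : Matrix n n 𝕜} (hY : Y.IsHermitian) (hYE : Y * E = Y)
    {f : ℝ → ℝ} (hf : f 0 = 0) : cfc f Y * E = cfc f Y := by
  have hcomm := cfc_commute_cfc (fun t => f t / t) id Y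
  rw [cfc_id ℝ Y hY.isSelfAdjoint] at hcomm
  rw [cfc_eq_mul_cfc_div hY hf, ← hcomm.eq, Matrix.mul_assoc, hYE]

theorem mul_cfc_of_mul_eq {Y E : Matrix n n 𝕜} (hY : Y.IsHermitian) (hEY : E * Y = Y)
    {f : ℝ → ℝ} (hf : f 0 = 0) : E * cfc f Y = cfc f Y := by
  rw [cfc_eq_mul_cfc_div hY hf, ← Matrix.mul_assoc, hEY]

theorem mul_cfc_mul_eq_cfc_div {S T E : Matrix n n 𝕜} (hST : S * T = 1) (hTS : T * S = 1)
    (hT : Tᴴ = T) (hE : E.IsHermitian) (hEE : E * E = E) {f : ℝ → ℝ} (hf : f 0 = 0) :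
    S * cfc f (T * E * T) * S = cfc (fun t => f t / t) (E * (T * T) * E) := by
  set M := E * T
  have hN : Mᴴ * M = T * E * T := by
    rw [conjTranspose_mul, hT, hE.eq, Matrix.mul_assoc, ← Matrix.mul_assoc E, hEE,
      Matrix.mul_assoc]
  have hY : M * Mᴴ = E * (T * T) * E := by
    rw [conjTranspose_mul, hT, hE.eq]
    simp only [M, Matrix.mul_assoc]
  have hSM : S * Mᴴ = E := by
    rw [conjTranspose_mul, hT, hE.eq, ← Matrix.mul_assoc, hST, Matrix.one_mul]
  have hMS : M * S = E := by rw [Matrix.mul_assoc, hTS, Matrix.mul_one]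
  have hEY : E * (M * Mᴴ) = M * Mᴴ := by
    rw [hY, ← Matrix.mul_assoc, ← Matrix.mul_assoc, hEE]
  have hYE : M * Mᴴ * E = M * Mᴴ := by rw [hY, Matrix.mul_assoc, hEE]
  have hYH := isHermitian_mul_conjTranspose_self M
  rw [← hN, ← hY, cfc_eq_mul_cfc_div (isHermitian_conjTranspose_mul_self M) hf]
  calc S * (Mᴴ * M * cfc (fun t => f t / t) (Mᴴ * M)) * S
      = S * Mᴴ * (M * cfc (fun t => f t / t) (Mᴴ * M)) * S := by
        simp only [Matrix.mul_assoc]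
    _ = E * cfc (fun t => f t / t) (M * Mᴴ) * E := by
      rw [hSM, mul_cfc_conjTranspose_mul_self]
      simp only [Matrix.mul_assoc, hMS]
    _ = cfc (fun t => f t / t) (M * Mᴴ) := by
      rw [mul_cfc_of_mul_eq hYH hEY (f := fun t => f t / t) (div_zero _),
        cfc_mul_of_mul_eq hYH hYE (f := fun t => f t / t) (div_zero _)]

theorem PosDef.cfc_rpow_mul_cfc_rpow {A : Matrix n n 𝕜} (hA : A.PosDef) (p q : ℝ) :
    cfc (fun t : ℝ => t ^ p) A * cfc (fun t : ℝ => t ^ q) A =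
      cfc (fun t : ℝ => t ^ (p + q)) A := by
  rw [← cfc_mul (· ^ p) (· ^ q) A (A.finite_real_spectrum.continuousOn _)
    (A.finite_real_spectrum.continuousOn _)]
  refine cfc_congr fun t ht => ?_
  obtain ⟨i, rfl⟩ := hA.isHermitian.spectrum_real_eq_range_eigenvalues ▸ ht
  exact (Real.rpow_add (hA.eigenvalues_pos i) p q).symm

end Matrix

section

variable {n : ℕ}

theorem hfun_ofReal_eq_cfc {B : Matrix (Fin n) (Fin n) ℂ} (hB : B.IsHermitian) (f : ℝ → ℝ) :
    hfun (fun t => (f t : ℂ)) B = cfc f B := by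
  rw [hB.cfc_eq, IsHermitian.cfc, hfun, dif_pos hB, Unitary.conjStarAlgAut_apply]
  rfl

theorem mrpow_eq_cfc {A : Matrix (Fin n) (Fin n) ℂ} (hA : A.IsHermitian) (p : ℝ) :
    mrpow A p = cfc (fun t : ℝ => t ^ p) A :=
  hfun_ofReal_eq_cfc hA _

theorem gpow_sub_one_eq_cfc_div {B : Matrix (Fin n) (Fin n) ℂ} (hB : B.IsHermitian) (p : ℝ) :
    gpow B (p - 1) = cfc (fun t : ℝ => t ^ p / t) B := by
  rw [gpow, ← hfun_ofReal_eq_cfc hB]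
  congr with t
  split_ifs with ht
  · simp [ht]
  · simp [Real.rpow_sub_one ht]

end

theorem stmt15_general {n : ℕ} (α : ℝ) (hα0 : 0 < α)
    (A E : Matrix (Fin n) (Fin n) ℂ) (hA : A.PosDef)
    (hE : E.IsHermitian) (hEidem : E * E = E) :
    kuboAndo (fun x => x ^ α) A E = gpow (E * mrpow A (-1) * E) (α - 1) := by
  set S := cfc (fun t : ℝ => t ^ (1 / 2 : ℝ)) A
  set T := cfc (fun t : ℝ => t ^ (-(1 / 2) : ℝ)) A
  have hA1 : cfc (fun _ : ℝ => (1 : ℝ)) A = 1 :=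
    cfc_const_one ℝ A hA.isHermitian.isSelfAdjoint
  have hST : S * T = 1 := by rw [hA.cfc_rpow_mul_cfc_rpow]; norm_num [hA1]
  have hTS : T * S = 1 := by rw [hA.cfc_rpow_mul_cfc_rpow]; norm_num [hA1]
  have hTT : T * T = cfc (fun t : ℝ => t ^ (-1 : ℝ)) A := by
    rw [hA.cfc_rpow_mul_cfc_rpow]; norm_num
  have hT : Tᴴ = T := cfc_predicate (p := IsSelfAdjoint) _ A
  have hTET : (T * E * T).IsHermitian := by
    simpa only [hT] using isHermitian_conjTranspose_mul_mul T hE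
  have hETTE : (E * (T * T) * E).IsHermitian := by
    have hTT' : (T * T).IsHermitian := by
      simpa only [hT] using isHermitian_conjTranspose_mul_self T
    simpa only [hE.eq] using isHermitian_mul_mul_conjTranspose E hTT'
  rw [kuboAndo, mrpow_eq_cfc hA.isHermitian, mrpow_eq_cfc hA.isHermitian,
    mrpow_eq_cfc hA.isHermitian, ← hTT, hfun_ofReal_eq_cfc hTET (fun t => t ^ α),
    gpow_sub_one_eq_cfc_div hETTE]
  exact mul_cfc_mul_eq_cfc_div hST hTS hT hE hEidem (Real.zero_rpow hα0.ne')

theorem stmt15 {n : ℕ} (α : ℝ) (hα0 : 0 < α) (hα1 : α ≤ 1)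
    (A E : Matrix (Fin n) (Fin n) ℂ) (hA : A.PosDef)
    (hE : E.IsHermitian) (hEidem : E * E = E) :
    kuboAndo (fun x => x ^ α) A E = gpow (E * mrpow A (-1) * E) (α - 1) :=
  stmt15_general α hα0 A E hA hE hEidem
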